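/- arXiv:2506.10339 — 7 statements merged into one kernel-verified Lean document; each statement's English description precedes it below -/
import Mathlib

section
/- Fix ε ∈ (0,1) and an integer time t. Then the number of shift vectors τ ∈ ∏_{i=1}^n {0, …, T_i − 1} satisfying Σ_{i=1}^n I_i(τ_i, t) ≥ ((1+ε)/2)·Σ_{i=1}^n H_i·(1 + 1/T_i) is at most exp(−(ε²/6)·H_Σ/H_max)·∏_{i=1}^n T_i, where H_max = max_{i∈[n]} H_i. Equivalently, if τ^R is drawn by independently sampling each τ^R_i uniformly from {0, …, T_i − 1}, then P[Σ_{i=1}^n I_i(τ^R_i, t) ≥ ((1+ε)/2)·Σ_{i=1}^n H_i·(1 + 1/T_i)] ≤ exp(−(ε²/6)·H_Σ/H_max). -/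
noncomputable def invLevel (T H : ℕ) (τ t : ℤ) : ℝ :=
  (H : ℝ) * (1 - (((t - τ) % (T : ℤ) : ℤ) : ℝ) / (T : ℝ))

noncomputable def totalInv {ι : Type*} [Fintype ι] (T H : ι → ℕ) (τ : ι → ℤ) (t : ℤ) : ℝ :=
  ∑ i, invLevel (T i) (H i) (τ i) t

def cycleLen {ι : Type*} [Fintype ι] (T : ι → ℕ) : ℕ := Finset.univ.lcm T

noncomputable def Imax {ι : Type*} [Fintype ι] (T H : ι → ℕ) (τ : ι → ℤ) : ℝ :=
  sSup (totalInv T H τ '' Set.Ico (0 : ℤ) (cycleLen T : ℤ))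

noncomputable def OPTdisc {ι : Type*} [Fintype ι] (T H : ι → ℕ) : ℝ :=
  sInf (Set.range (Imax T H))

/-!
A Chernoff bound. For uniformly random shifts the levels `I_i(τ_i, t)` are independent, take
values in `[0, H_max]` and have mean `H_i (1 + 1/T_i) / 2` (the residues `(t - τ_i) mod T_i` run
through `0, …, T_i - 1`). Markov's inequality applied to `exp (s · Σ I_i)` with
`s = 2ε / (3 H_max)`, the factorization of its expectation over the coordinates, and the convexity
bound `exp (s x) ≤ 1 + (x / H_max) (exp (s H_max) - 1)` give the estimate.
-/

open Finset Real

lemma exp_mul_le_one_add_div_mul {x B : ℝ} (s : ℝ) (hx0 : 0 ≤ x) (hxB : x ≤ B) (hB : 0 < B) :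
    exp (s * x) ≤ 1 + x / B * (exp (s * B) - 1) := by
  have hxB' : x / B ≤ 1 := (div_le_one hB).2 hxB
  have h := convexOn_exp.2 (Set.mem_univ 0) (Set.mem_univ (s * B)) (by linarith)
    (div_nonneg hx0 hB.le) (sub_add_cancel 1 (x / B))
  have hx : x / B * (s * B) = s * x := by field_simp
  simp only [smul_eq_mul, mul_zero, exp_zero, zero_add, hx] at h
  linarith

lemma exp_le_one_add_add_three_quarters_sq {x : ℝ} (hx0 : 0 ≤ x) (hx1 : x ≤ 1) :
    exp x ≤ 1 + x + 3 / 4 * x ^ 2 := by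
  have h := exp_bound' hx0 hx1 (n := 2) two_pos
  norm_num [sum_range_succ, Nat.factorial] at h
  linarith

lemma sum_exp_mul_le_card_mul_exp {α : Type*} {S : Finset α} {f : α → ℝ} {B m : ℝ} (s : ℝ)
    (hB : 0 < B) (hf0 : ∀ x ∈ S, 0 ≤ f x) (hfB : ∀ x ∈ S, f x ≤ B) (hm : ∑ x ∈ S, f x = #S * m) :
    ∑ x ∈ S, exp (s * f x) ≤ #S * exp ((exp (s * B) - 1) * m / B) :=
  calc ∑ x ∈ S, exp (s * f x) ≤ ∑ x ∈ S, (1 + f x / B * (exp (s * B) - 1)) :=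
        sum_le_sum fun x hx => exp_mul_le_one_add_div_mul s (hf0 x hx) (hfB x hx) hB
    _ = #S * (1 + (exp (s * B) - 1) * m / B) := by
        rw [sum_add_distrib, ← sum_mul, ← sum_div, hm]; simp; ring
    _ ≤ #S * exp ((exp (s * B) - 1) * m / B) := by
        gcongr; linarith [add_one_le_exp ((exp (s * B) - 1) * m / B)]

section Chernoff

variable {ι α : Type*} [Fintype ι] [DecidableEq ι]

open Classical in
lemma card_filter_mul_exp_le_prod_sum_exp (S : ι → Finset α) (X : ι → α → ℝ) {a s : ℝ}
    (hs : 0 ≤ s) :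
    #{τ ∈ Fintype.piFinset S | a ≤ ∑ i, X i (τ i)} * exp (s * a)
      ≤ ∏ i, ∑ x ∈ S i, exp (s * X i x) := by
  rw [prod_univ_sum]
  calc _ ≤ ∑ τ ∈ Fintype.piFinset S with a ≤ ∑ i, X i (τ i), exp (s * ∑ i, X i (τ i)) := by
        rw [← nsmul_eq_mul]
        exact card_nsmul_le_sum _ _ _ fun τ hτ =>
          exp_le_exp.2 (mul_le_mul_of_nonneg_left (mem_filter.1 hτ).2 hs)
    _ ≤ ∑ τ ∈ Fintype.piFinset S, exp (s * ∑ i, X i (τ i)) :=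
        sum_le_sum_of_subset_of_nonneg (filter_subset _ _) fun _ _ _ => (exp_pos _).le
    _ = _ := by simp only [mul_sum, exp_sum]

open Classical in
theorem card_filter_le_exp_mul_prod_card (S : ι → Finset α) (X : ι → α → ℝ) (m : ι → ℝ)
    {B ε : ℝ} (hB : 0 < B) (hX0 : ∀ i, ∀ x ∈ S i, 0 ≤ X i x) (hXB : ∀ i, ∀ x ∈ S i, X i x ≤ B)
    (hm : ∀ i, ∑ x ∈ S i, X i x = #(S i) * m i) (hm0 : ∀ i, 0 ≤ m i)
    (hε0 : 0 ≤ ε) (hε1 : ε ≤ 3 / 2) :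
    #{τ ∈ Fintype.piFinset S | (1 + ε) * ∑ i, m i ≤ ∑ i, X i (τ i)}
      ≤ exp (-(ε ^ 2 / 3) * ((∑ i, m i) / B)) * ∏ i, (#(S i) : ℝ) := by
  set μ := ∑ i, m i
  set s := 2 * ε / (3 * B)
  have hsB : s * B = 2 * ε / 3 := by simp only [s]; field_simp
  have hμ : 0 ≤ μ := sum_nonneg fun i _ => hm0 i
  have hmgf : ∏ i, ∑ x ∈ S i, exp (s * X i x)
      ≤ (∏ i, (#(S i) : ℝ)) * exp ((exp (s * B) - 1) * μ / B) := by
    rw [mul_sum, sum_div, exp_sum, ← prod_mul_distrib]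
    exact prod_le_prod (fun i _ => sum_nonneg fun _ _ => (exp_pos _).le)
      fun i _ => sum_exp_mul_le_card_mul_exp s hB (hX0 i) (hXB i) (hm i)
  have hexp : exp (s * B) - 1 ≤ 2 * ε / 3 + ε ^ 2 / 3 := by
    have := exp_le_one_add_add_three_quarters_sq (x := 2 * ε / 3) (by positivity) (by linarith)
    rw [hsB]; linarith
  have hexponent : (exp (s * B) - 1) * μ / B - s * ((1 + ε) * μ) ≤ -(ε ^ 2 / 3) * (μ / B) := by
    have : (exp (s * B) - 1) * μ / B ≤ (2 * ε / 3 + ε ^ 2 / 3) * μ / B := by gcongr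
    have : (2 * ε / 3 + ε ^ 2 / 3) * μ / B - s * ((1 + ε) * μ) = -(ε ^ 2 / 3) * (μ / B) := by
      simp only [s]; field_simp; ring
    linarith
  have hmarkov := (card_filter_mul_exp_le_prod_sum_exp S X (a := (1 + ε) * μ)
    (by positivity : 0 ≤ s)).trans hmgf
  rw [← le_div_iff₀ (exp_pos _), mul_div_assoc, ← exp_sub] at hmarkov
  calc _ ≤ _ := hmarkov
    _ ≤ (∏ i, (#(S i) : ℝ)) * exp (-(ε ^ 2 / 3) * (μ / B)) :=
        mul_le_mul_of_nonneg_left (exp_le_exp.2 hexponent) (prod_nonneg fun _ _ => by positivity)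
    _ = _ := mul_comm _ _

end Chernoff

lemma emod_sub_emod_sub_of_mem_Ico {T a : ℤ} (t : ℤ) (ha : a ∈ Ico 0 T) :
    (t - (t - a) % T) % T = a := by
  rw [mem_Ico] at ha
  have : t - (t - a) % T ≡ t - (t - a) [ZMOD T] := (Int.mod_modEq _ _).sub_left t
  rw [this, sub_sub_cancel, Int.emod_eq_of_lt ha.1 ha.2]

lemma sum_Ico_emod_sub_eq_sum_range (T : ℕ) (t : ℤ) (f : ℤ → ℝ) :
    ∑ τ ∈ Ico (0 : ℤ) T, f ((t - τ) % T) = ∑ k ∈ range T, f k := by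
  have hmem : ∀ τ ∈ Ico (0 : ℤ) T, (t - τ) % T ∈ Ico (0 : ℤ) T := fun τ hτ => by
    have hT : (0 : ℤ) < T := by grind
    exact mem_Ico.2 ⟨Int.emod_nonneg _ hT.ne', Int.emod_lt_of_pos _ hT⟩
  refine sum_nbij' (fun τ => ((t - τ) % T).toNat) (fun k => (t - k) % T) ?_ ?_ ?_ ?_ ?_
  · intro τ hτ; have := mem_Ico.1 (hmem τ hτ); rw [mem_range]; omega
  · intro k hk; exact hmem k (by simpa using hk)
  · intro τ hτ
    rw [Int.toNat_of_nonneg (mem_Ico.1 (hmem τ hτ)).1, emod_sub_emod_sub_of_mem_Ico t hτ]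
  · intro k hk
    rw [emod_sub_emod_sub_of_mem_Ico t (by simpa using hk), Int.toNat_natCast]
  · intro τ hτ; rw [Int.toNat_of_nonneg (mem_Ico.1 (hmem τ hτ)).1]

lemma sum_range_natCast_mul_two (T : ℕ) : ∑ k ∈ range T, (k : ℝ) * 2 = T * (T - 1) := by
  induction T with
  | zero => simp
  | succ n ih => rw [sum_range_succ, ih]; push_cast; ring

lemma sum_Ico_invLevel (T H : ℕ) (t : ℤ) :
    ∑ τ ∈ Ico (0 : ℤ) T, invLevel T H τ t = #(Ico (0 : ℤ) T) * (H * (1 + 1 / T) / 2) := by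
  rcases T.eq_zero_or_pos with rfl | hT
  · simp
  have hT' : (T : ℝ) ≠ 0 := by positivity
  have gauss := sum_range_natCast_mul_two T
  unfold invLevel
  rw [sum_Ico_emod_sub_eq_sum_range T t fun k => (H : ℝ) * (1 - k / T)]
  simp only [Int.card_Ico, sub_zero, Int.toNat_natCast, Int.cast_natCast, mul_sub, mul_one,
    sum_sub_distrib, sum_const, card_range, nsmul_eq_mul, mul_div_assoc', ← sum_div, ← mul_sum,
    ← sum_mul] at gauss ⊢
  field_simp
  linear_combination -(H : ℝ) * gauss

lemma invLevel_mem_Icc {T H : ℕ} {τ : ℤ} (t : ℤ) (hτ : τ ∈ Ico (0 : ℤ) T) :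
    invLevel T H τ t ∈ Set.Icc 0 (H : ℝ) := by
  have hT : (0 : ℤ) < T := by grind
  have hr : ((t - τ) % T : ℤ) / (T : ℝ) ∈ Set.Icc 0 1 := by
    have hT' : (0 : ℝ) < T := by exact_mod_cast hT
    refine ⟨div_nonneg ?_ hT'.le, (div_le_one hT').2 ?_⟩
    · exact_mod_cast Int.emod_nonneg _ hT.ne'
    · exact_mod_cast (Int.emod_lt_of_pos _ hT).le
  have hH : (0 : ℝ) ≤ H := Nat.cast_nonneg H
  unfold invLevel
  constructor <;> nlinarith [hr.1, hr.2]

open Classical in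
theorem stmt2_general {n : ℕ} (T H : Fin n → ℕ) (ε : ℝ) (hε : ε ∈ Set.Ioo (0 : ℝ) 1) (t : ℤ) :
    (((Fintype.piFinset fun i => Finset.Ico (0 : ℤ) (T i : ℤ)).filter
        (fun τ => ((1 + ε) / 2) * ∑ i, (H i : ℝ) * (1 + 1 / (T i : ℝ))
          ≤ ∑ i, invLevel (T i) (H i) (τ i) t)).card : ℝ)
      ≤ Real.exp (-(ε ^ 2 / 6) * ((∑ i, (H i : ℝ)) / ((Finset.univ.sup H : ℕ) : ℝ)))
          * ∏ i, (T i : ℝ) := by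
  obtain hB | hB := (Nat.cast_nonneg (univ.sup H) : (0 : ℝ) ≤ _).eq_or_lt
  · -- with `H_max = 0` the bound is the trivial `∏ T_i`, as `x / 0 = 0`
    rw [← hB, div_zero, mul_zero, exp_zero, one_mul]
    exact_mod_cast (card_filter_le _ _).trans (by simp)
  set B : ℝ := ((univ.sup H : ℕ) : ℝ)
  set m : Fin n → ℝ := fun i => H i * (1 + 1 / T i) / 2
  have hHB (i : Fin n) : (H i : ℝ) ≤ B := Nat.cast_le.2 (le_sup (f := H) (mem_univ i))
  have hthreshold :
      (1 + ε) / 2 * ∑ i, (H i : ℝ) * (1 + 1 / (T i : ℝ)) = (1 + ε) * ∑ i, m i := by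
    simp only [m, ← sum_div]; ring
  have hμ : (∑ i, (H i : ℝ)) / 2 ≤ ∑ i, m i := by
    rw [sum_div]
    gcongr with i
    have : (0 : ℝ) ≤ 1 / T i := by positivity
    simp only [m]; nlinarith [(Nat.cast_nonneg (H i) : (0 : ℝ) ≤ _)]
  have hchernoff := card_filter_le_exp_mul_prod_card (fun i => Ico (0 : ℤ) (T i))
    (fun i τ => invLevel (T i) (H i) τ t) m hB (fun i τ hτ => (invLevel_mem_Icc t hτ).1)
    (fun i τ hτ => (invLevel_mem_Icc t hτ).2.trans (hHB i)) (fun i => sum_Ico_invLevel _ _ t)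
    (fun i => by positivity) hε.1.le (by linarith [hε.2])
  simp only [Int.card_Ico, sub_zero, Int.toNat_natCast] at hchernoff
  rw [hthreshold]
  refine hchernoff.trans (mul_le_mul_of_nonneg_right (exp_le_exp.2 ?_) (by positivity))
  have : ε ^ 2 / 6 * ((∑ i, (H i : ℝ)) / B) ≤ ε ^ 2 / 3 * ((∑ i, m i) / B) := by
    rw [show ε ^ 2 / 6 * ((∑ i, (H i : ℝ)) / B) = ε ^ 2 / 3 * ((∑ i, (H i : ℝ)) / 2 / B) by ring]
    gcongr
  linarith

open Classical in
/-- The number of shift vectors `τ ∈ ∏ {0,…,T_i−1}` whose inventory level at a fixed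
integer time `t` is at least `((1+ε)/2)·Σ H_i(1+1/T_i)` is at most
`exp(−(ε²/6)·H_Σ/H_max)·∏ T_i`. -/
theorem stmt2 {n : ℕ} (hn : 0 < n) (T H : Fin n → ℕ) (hT : ∀ i, 0 < T i)
    (hH : ∀ i, 0 < H i) (ε : ℝ) (hε : ε ∈ Set.Ioo (0 : ℝ) 1) (t : ℤ) :
    (((Fintype.piFinset fun i => Finset.Ico (0 : ℤ) (T i : ℤ)).filter
        (fun τ => ((1 + ε) / 2) * ∑ i, (H i : ℝ) * (1 + 1 / (T i : ℝ))
          ≤ ∑ i, invLevel (T i) (H i) (τ i) t)).card : ℝ)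
      ≤ Real.exp (-(ε ^ 2 / 6) * ((∑ i, (H i : ℝ)) / ((Finset.univ.sup H : ℕ) : ℝ)))
          * ∏ i, (T i : ℝ) :=
  stmt2_general T H ε hε t
end

section
/- Let ε ∈ (0,1), let n be a positive integer with n ≥ 2/ε, and let p_1, …, p_n be distinct primes, each at least n; set Λ = ∏_{i=1}^n p_i. Then the number of integers t ∈ {0, …, Λ − 1} satisfying Σ_{i=1}^n (1 − (t mod p_i)/p_i) ≥ (1/2 + ε)·n is at most exp(−ε²n/6)·Λ. -/
/-!
Chernoff's method: for `s ≥ 0` the count is at most `e^{-s(1/2+ε)n} ∑_t e^{s X(t)}`, where `X(t)`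
is the total inventory. By the Chinese remainder theorem `t ↦ (t mod p_i)_i` is a bijection from
`[0, Λ)` onto `∏_i [0, p_i)`, so the sum factors as `∏_i ∑_{r < p_i} e^{s(1 - r/p_i)}`. Convexity of
`exp` bounds each factor by `p_i exp(μ_i (e^s - 1))`, where `μ_i = (p_i + 1)/(2p_i) ≤ 1/2 + ε/4` is
the mean inventory level (this is where `p_i ≥ n ≥ 2/ε` enters). Taking `s = ε/2` and
`e^s ≤ 1 + s + s²` leaves the exponent `-ε²n/6`.
-/

open Finset Real
open scoped Function

section ChineseRemainder

variable {ι : Type*} [Fintype ι] {m : ι → ℕ}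

theorem modEq_prod_of_pairwise_coprime (hm : Pairwise (Nat.Coprime on m)) {a b : ℕ}
    (h : ∀ i, a ≡ b [MOD m i]) : a ≡ b [MOD ∏ i, m i] := by
  rw [Nat.modEq_iff_dvd, Nat.cast_prod]
  exact Fintype.prod_dvd_of_coprime (fun i j hij => Nat.isCoprime_iff_coprime.mpr (hm hij))
    fun i => Nat.modEq_iff_dvd.mp (h i)

theorem injOn_range_prod_mod (hm : Pairwise (Nat.Coprime on m)) :
    Set.InjOn (fun t i => t % m i) (range (∏ i, m i) : Set ℕ) := fun _ ha _ hb hab =>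
  (modEq_prod_of_pairwise_coprime hm fun i => congrFun hab i).eq_of_lt_of_lt
    (mem_range.mp ha) (mem_range.mp hb)

theorem sum_range_prod_prod_mod {R : Type*} [CommSemiring R]
    (hm : Pairwise (Nat.Coprime on m)) (f : ι → ℕ → R) :
    ∑ t ∈ range (∏ i, m i), ∏ i, f i (t % m i) = ∏ i, ∑ r ∈ range (m i), f i r := by
  classical
  have hmaps : ∀ t ∈ range (∏ i, m i),
      (fun i => t % m i) ∈ Fintype.piFinset fun i => range (m i) := by
    intro t ht
    have hprod : ∏ i, m i ≠ 0 := (Nat.zero_lt_of_lt (mem_range.mp ht)).ne'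
    exact Fintype.mem_piFinset.mpr fun i =>
      mem_range.mpr (Nat.mod_lt _ (Nat.pos_of_ne_zero (prod_ne_zero_iff.mp hprod i (mem_univ i))))
  rw [prod_univ_sum]
  refine sum_nbij (fun t i => t % m i) hmaps (injOn_range_prod_mod hm)
    (surjOn_of_injOn_of_card_le _ hmaps (injOn_range_prod_mod hm) ?_) fun _ _ => rfl
  simp [Fintype.card_piFinset]

end ChineseRemainder

theorem card_filter_le_exp_mul_sum {α : Type*} (S : Finset α) (X : α → ℝ) (a : ℝ)
    [DecidablePred fun t => a ≤ X t] {s : ℝ} (hs : 0 ≤ s) :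
    (#(S.filter fun t => a ≤ X t) : ℝ) ≤ exp (-(s * a)) * ∑ t ∈ S, exp (s * X t) := by
  rw [mul_sum, card_eq_sum_ones, Nat.cast_sum]
  calc ∑ t ∈ S.filter (fun t => a ≤ X t), ((1 : ℕ) : ℝ)
      ≤ ∑ t ∈ S.filter (fun t => a ≤ X t), exp (-(s * a)) * exp (s * X t) := by
        refine sum_le_sum fun t ht => ?_
        rw [← exp_add, Nat.cast_one]
        exact one_le_exp (by nlinarith [(mem_filter.mp ht).2])
    _ ≤ ∑ t ∈ S, exp (-(s * a)) * exp (s * X t) :=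
        sum_le_sum_of_subset_of_nonneg (filter_subset _ _) fun _ _ _ => by positivity

theorem exp_mul_le_one_add_mul_exp_sub_one (s : ℝ) {x : ℝ} (hx₀ : 0 ≤ x) (hx₁ : x ≤ 1) :
    exp (s * x) ≤ 1 + x * (exp s - 1) := by
  have h := convexOn_exp.2 (Set.mem_univ 0) (Set.mem_univ s) (sub_nonneg.mpr hx₁) hx₀
    (sub_add_cancel 1 x)
  simp only [smul_eq_mul, mul_zero, zero_add, exp_zero, mul_one] at h
  rw [mul_comm]
  linarith

theorem sum_range_one_sub_div {P : ℕ} (hP : 0 < P) :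
    ∑ r ∈ range P, (1 - (r : ℝ) / P) = (P + 1) / 2 := by
  have hgauss : (∑ r ∈ range P, (r : ℝ)) * 2 = P * (P - 1) := by
    rw [← Nat.cast_sum, ← Nat.cast_two, ← Nat.cast_mul, sum_range_id_mul_two, Nat.cast_mul,
      Nat.cast_sub hP, Nat.cast_one]
  rw [sum_sub_distrib, ← sum_div, sum_const, card_range, nsmul_one]
  field_simp
  linarith

theorem sum_range_exp_mul_one_sub_div_le {P : ℕ} (hP : 0 < P) {s : ℝ} (hs : 0 ≤ s) {μ : ℝ}
    (hμ : ((P : ℝ) + 1) / (2 * P) ≤ μ) :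
    ∑ r ∈ range P, exp (s * (1 - (r : ℝ) / P)) ≤ P * exp (μ * (exp s - 1)) := by
  have hP' : (0 : ℝ) < P := Nat.cast_pos.mpr hP
  have hes : 0 ≤ exp s - 1 := sub_nonneg.mpr (one_le_exp hs)
  calc ∑ r ∈ range P, exp (s * (1 - (r : ℝ) / P))
      ≤ ∑ r ∈ range P, (1 + (1 - (r : ℝ) / P) * (exp s - 1)) := by
        refine sum_le_sum fun r hr => exp_mul_le_one_add_mul_exp_sub_one s ?_ ?_
        · rw [sub_nonneg, div_le_one hP']
          exact_mod_cast (mem_range.mp hr).le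
        · linarith [show 0 ≤ (r : ℝ) / P by positivity]
    _ = P * (1 + (P + 1) / (2 * P) * (exp s - 1)) := by
        rw [sum_add_distrib, ← sum_mul, sum_range_one_sub_div hP, sum_const, card_range,
          nsmul_one]
        field_simp
    _ ≤ P * (1 + μ * (exp s - 1)) := by gcongr
    _ ≤ P * exp (μ * (exp s - 1)) := by
        gcongr
        linarith [add_one_le_exp (μ * (exp s - 1))]

theorem chernoff_exponent_le {ε : ℝ} (hε₀ : 0 ≤ ε) (hε₁ : ε ≤ 1) :
    (1 / 2 + ε / 4) * (exp (ε / 2) - 1) - ε / 2 * (1 / 2 + ε) ≤ -(ε ^ 2) / 6 := by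
  have hexp := abs_exp_sub_one_sub_id_le (x := ε / 2) (by rw [abs_le]; constructor <;> linarith)
  have hexp' := (abs_le.mp hexp).2
  nlinarith [mul_le_mul_of_nonneg_left hexp' (by linarith : (0 : ℝ) ≤ 1 / 2 + ε / 4)]

open Classical in
theorem stmt4_general (ε : ℝ) (hε : ε ∈ Set.Ioo (0 : ℝ) 1) (n : ℕ)
    (hn2 : 2 / ε ≤ (n : ℝ)) (p : Fin n → ℕ) (hp : ∀ i, (p i).Prime)
    (hinj : Function.Injective p) (hge : ∀ i, n ≤ p i) :
    (((Finset.range (∏ i, p i)).filter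
        (fun t => ((1 : ℝ) / 2 + ε) * n ≤ ∑ i, (1 - ((t % p i : ℕ) : ℝ) / (p i : ℝ)))).card : ℝ)
      ≤ Real.exp (-(ε ^ 2) * n / 6) * ∏ i, (p i : ℝ) := by
  obtain ⟨hε₀, hε₁⟩ := hε
  have hcop : Pairwise (Nat.Coprime on p) := fun i j hij =>
    (Nat.coprime_primes (hp i) (hp j)).mpr (hinj.ne hij)
  have hmean : ∀ i, ((p i : ℝ) + 1) / (2 * p i) ≤ 1 / 2 + ε / 4 := by
    intro i
    have hpi : (0 : ℝ) < p i := Nat.cast_pos.mpr (hp i).pos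
    have : 2 ≤ ε * p i := (div_le_iff₀' hε₀).mp (hn2.trans (Nat.cast_le.mpr (hge i)))
    rw [div_le_iff₀ (by positivity)]
    nlinarith
  calc _ ≤ exp (-(ε / 2 * ((1 / 2 + ε) * n))) *
          ∑ t ∈ range (∏ i, p i), exp (ε / 2 * ∑ i, (1 - ((t % p i : ℕ) : ℝ) / p i)) :=
        card_filter_le_exp_mul_sum _ _ _ (by positivity)
    _ = exp (-(ε / 2 * ((1 / 2 + ε) * n))) *
          ∏ i, ∑ r ∈ range (p i), exp (ε / 2 * (1 - (r : ℝ) / p i)) := by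
        simp_rw [mul_sum, exp_sum]
        rw [← mul_sum, sum_range_prod_prod_mod hcop fun i r => exp (ε / 2 * (1 - (r : ℝ) / p i))]
    _ ≤ exp (-(ε / 2 * ((1 / 2 + ε) * n))) *
          ∏ i, (p i * exp ((1 / 2 + ε / 4) * (exp (ε / 2) - 1))) := by
        gcongr with i
        exact sum_range_exp_mul_one_sub_div_le (hp i).pos (by positivity) (hmean i)
    _ = exp (n * ((1 / 2 + ε / 4) * (exp (ε / 2) - 1) - ε / 2 * (1 / 2 + ε))) *
          ∏ i, (p i : ℝ) := by
        rw [prod_mul_distrib, prod_const, card_univ, Fintype.card_fin, ← exp_nat_mul,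
          mul_comm (∏ i, (p i : ℝ)), ← mul_assoc, ← exp_add]
        congr 2
        ring
    _ ≤ exp (-(ε ^ 2) * n / 6) * ∏ i, (p i : ℝ) := by
        gcongr
        nlinarith [chernoff_exponent_le hε₀.le hε₁.le, (n.cast_nonneg : (0 : ℝ) ≤ n)]

open Classical in
/-- Let `p_1,…,p_n` be distinct primes, each at least `n ≥ 2/ε`, and `Λ = ∏ p_i`.
The number of integers `t ∈ {0,…,Λ−1}` with `Σ_i (1 − (t mod p_i)/p_i) ≥ (1/2+ε)·n`
is at most `exp(−ε²n/6)·Λ`. -/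
theorem stmt4 (ε : ℝ) (hε : ε ∈ Set.Ioo (0 : ℝ) 1) (n : ℕ) (hn : 0 < n)
    (hn2 : 2 / ε ≤ (n : ℝ)) (p : Fin n → ℕ) (hp : ∀ i, (p i).Prime)
    (hinj : Function.Injective p) (hge : ∀ i, n ≤ p i) :
    (((Finset.range (∏ i, p i)).filter
        (fun t => ((1 : ℝ) / 2 + ε) * n ≤ ∑ i, (1 - ((t % p i : ℕ) : ℝ) / (p i : ℝ)))).card : ℝ)
      ≤ Real.exp (-(ε ^ 2) * n / 6) * ∏ i, (p i : ℝ) :=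
  stmt4_general ε hε n hn2 p hp hinj hge
end

section
/- Let ε ∈ (0,1), let n ≥ 2/ε, and let p_1, …, p_n be distinct primes, each at least n. Consider the discrete inventory staggering instance with T_i = p_i and H_i = 1 for all i, so Λ = ∏_{i=1}^n p_i. Then: (a) every integer shift vector τ satisfies I_max(τ) = n, so in particular the all-zeros vector τ* = 0 is an optimal shift vector with I_max(τ*) = n; and (b) for every positive integer M, the number of M-tuples (x_1, …, x_M) ∈ {0, …, Λ−1}^M satisfying max_{m∈[M]} Σ_{i=1}^n I_i(0, x_m) ≥ (1/2 + ε)·I_max(τ*) is at most M·exp(−ε²n/6)·Λ^M; equivalently, for M independent uniform samples X_1, …, X_M on {0, …, Λ−1}, P[max_{m∈[M]} Σ_{i=1}^n I_i(0, X_m) ≥ (1/2 + ε)·I_max(τ*)] ≤ M·exp(−ε²n/6). -/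
/-!
By the Chinese remainder theorem, `t ↦ (t mod p_i)_i` is a bijection from `[0, Λ)` onto
`∏ i, [0, p_i)`. So every residue profile occurs, in particular the one aligning all shifts,
which makes the peak equal to `n`; and the exponential moment `∑_t exp (l · ∑_i I_i(0, t))`
factorises into one-dimensional sums, each controlled by convexity of `exp`. With `l = ε / 2`
this Chernoff bound shows that at most `exp (-ε² n / 6) · Λ` points reach `(1/2 + ε) n`,
and a union bound over the `M` samples finishes.
-/

open Finset Function Real

section ChineseRemainder

variable {ι : Type*} [Fintype ι] {q : ι → ℕ}

theorem cycleLen_eq_prod (hq : Pairwise (Nat.Coprime on q)) : cycleLen q = ∏ i, q i :=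
  Finset.lcm_eq_prod fun _ _ _ _ hij => hq hij

theorem bijOn_emod_Ico_prod [DecidableEq ι] (hq : Pairwise (Nat.Coprime on q)) :
    Set.BijOn (fun t i => t % (q i : ℤ)) (Ico (0 : ℤ) ((∏ i, q i : ℕ) : ℤ))
      (Fintype.piFinset fun i => Ico (0 : ℤ) (q i)) := by
  have hmaps : Set.MapsTo (fun t i => t % (q i : ℤ)) (Ico (0 : ℤ) ((∏ i, q i : ℕ) : ℤ))
      (Fintype.piFinset fun i => Ico (0 : ℤ) (q i)) := by
    intro t ht
    simp only [coe_Ico, Set.mem_Ico, mem_coe, Fintype.mem_piFinset, mem_Ico] at ht ⊢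
    intro i
    have hqi : 0 < q i := Nat.pos_of_ne_zero fun h0 => by
      simp [Finset.prod_eq_zero (mem_univ i) h0] at ht; omega
    exact ⟨Int.emod_nonneg _ (by omega), Int.emod_lt_of_pos _ (by omega)⟩
  have hinj : Set.InjOn (fun t i => t % (q i : ℤ)) (Ico (0 : ℤ) ((∏ i, q i : ℕ) : ℤ)) := by
    intro t ht t' ht' h
    simp only [coe_Ico, Set.mem_Ico] at ht ht'
    have hdvd : ((∏ i, q i : ℕ) : ℤ) ∣ t' - t := by
      push_cast
      exact Fintype.prod_dvd_of_coprime (fun i j hij => Nat.isCoprime_iff_coprime.2 (hq hij))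
        fun i => Int.ModEq.dvd (congrFun h i)
    have := Int.eq_zero_of_abs_lt_dvd hdvd (abs_lt.2 ⟨by omega, by omega⟩)
    omega
  refine ⟨hmaps, hinj, surjOn_of_injOn_of_card_le _ hmaps hinj ?_⟩
  simp only [Fintype.card_piFinset, Int.card_Ico, sub_zero, Int.toNat_natCast, le_refl]

theorem sum_Ico_prod_emod_eq_prod_sum [DecidableEq ι] {R : Type*} [CommSemiring R]
    (hq : Pairwise (Nat.Coprime on q)) (f : ι → ℤ → R) :
    ∑ t ∈ Ico (0 : ℤ) ((∏ i, q i : ℕ) : ℤ), ∏ i, f i (t % q i) =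
      ∏ i, ∑ k ∈ Ico (0 : ℤ) (q i), f i k := by
  rw [prod_univ_sum]
  obtain ⟨hmaps, hinj, hsurj⟩ := bijOn_emod_Ico_prod hq
  exact sum_nbij _ hmaps hinj hsurj fun _ _ => rfl

end ChineseRemainder

theorem invLevel_emod (T H : ℕ) (τ t : ℤ) : invLevel T H τ (t % T) = invLevel T H τ t := by
  simp only [invLevel, Int.emod_sub_emod]

theorem invLevel_one_mem_Icc (q : ℕ) (τ t : ℤ) : invLevel q 1 τ t ∈ Set.Icc 0 1 := by
  rcases Nat.eq_zero_or_pos q with rfl | hq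
  · simp [invLevel] -- with `x / 0 = 0` the level is identically `1` when `q = 0`
  have hq' : (0 : ℤ) < q := by exact_mod_cast hq
  have hr0 : (0 : ℝ) ≤ ((t - τ) % q : ℤ) := by exact_mod_cast Int.emod_nonneg _ hq'.ne'
  have hr1 : (((t - τ) % q : ℤ) : ℝ) ≤ q := by exact_mod_cast (Int.emod_lt_of_pos _ hq').le
  have hfrac : (((t - τ) % q : ℤ) : ℝ) / q ∈ Set.Icc 0 1 :=
    ⟨by positivity, div_le_one_of_le₀ hr1 (Nat.cast_nonneg q)⟩
  simp only [invLevel, Nat.cast_one, one_mul, Set.mem_Icc] at hfrac ⊢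
  constructor <;> linarith [hfrac.1, hfrac.2]

theorem invLevel_one_of_dvd {q : ℕ} {τ t : ℤ} (h : (q : ℤ) ∣ t - τ) : invLevel q 1 τ t = 1 := by
  simp [invLevel, Int.emod_eq_zero_of_dvd h]

theorem sum_Ico_invLevel_one {q : ℕ} (hq : 0 < q) :
    ∑ k ∈ Ico (0 : ℤ) q, invLevel q 1 0 k = (q + 1) / 2 := by
  have hgauss : ∑ k ∈ range q, (k : ℝ) = q * (q - 1) / 2 := by
    have := congrArg (Nat.cast : ℕ → ℝ) (sum_range_id_mul_two q)
    push_cast [Nat.cast_sub hq] at this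
    linarith
  have hlevel : ∀ k ∈ range q, invLevel q 1 0 (k : ℤ) = 1 - (k : ℝ) / q := fun k hk => by
    rw [invLevel, sub_zero, Int.emod_eq_of_lt (by positivity) (by simpa using hk)]
    simp
  rw [Int.Ico_eq_finset_map, sum_map]
  simp only [sub_zero, Int.toNat_natCast, Embedding.trans_apply, Nat.castEmbedding_apply,
    addLeftEmbedding_apply, zero_add]
  rw [sum_congr rfl hlevel, sum_sub_distrib, ← sum_div, hgauss]
  simp only [sum_const, card_range, nsmul_eq_mul, mul_one]
  field_simp
  ring

theorem Imax_one_eq_card {ι : Type*} [Fintype ι] {q : ι → ℕ} (hq : Pairwise (Nat.Coprime on q))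
    (hq0 : ∀ i, 0 < q i) (τ : ι → ℤ) : Imax q (fun _ => 1) τ = Fintype.card ι := by
  classical
  refine IsGreatest.csSup_eq ⟨?_, ?_⟩
  · have hτ : (fun i => τ i % (q i : ℤ)) ∈ Fintype.piFinset fun i => Ico (0 : ℤ) (q i) := by
      simp only [Fintype.mem_piFinset, mem_Ico]
      intro i
      have hqi : (0 : ℤ) < q i := by exact_mod_cast hq0 i
      exact ⟨Int.emod_nonneg _ hqi.ne', Int.emod_lt_of_pos _ hqi⟩
    obtain ⟨t, ht, hteq⟩ := (bijOn_emod_Ico_prod hq).surjOn hτ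
    refine ⟨t, by simpa [cycleLen_eq_prod hq] using ht, ?_⟩
    have hone : ∀ i, invLevel (q i) 1 (τ i) t = 1 := fun i =>
      invLevel_one_of_dvd (Int.ModEq.dvd (congrFun hteq i).symm)
    simp [totalInv, hone]
  · rintro _ ⟨t, -, rfl⟩
    calc totalInv q (fun _ => 1) τ t ≤ ∑ _i : ι, (1 : ℝ) :=
          sum_le_sum fun i _ => (invLevel_one_mem_Icc (q i) (τ i) t).2
      _ = Fintype.card ι := by simp

theorem card_filter_le_mul_exp_le_sum_exp {α : Type*} (s : Finset α) (f : α → ℝ) {l : ℝ}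
    (hl : 0 ≤ l) (θ : ℝ) [DecidablePred fun t => θ ≤ f t] :
    #{t ∈ s | θ ≤ f t} * exp (l * θ) ≤ ∑ t ∈ s, exp (l * f t) := by
  calc #{t ∈ s | θ ≤ f t} * exp (l * θ) ≤ ∑ t ∈ s with θ ≤ f t, exp (l * f t) := by
        rw [← nsmul_eq_mul]
        exact card_nsmul_le_sum _ _ _ fun t ht =>
          exp_le_exp.2 (mul_le_mul_of_nonneg_left (mem_filter.1 ht).2 hl)
    _ ≤ ∑ t ∈ s, exp (l * f t) :=
        sum_le_sum_of_subset_of_nonneg (filter_subset _ _) fun _ _ _ => (exp_pos _).le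

theorem sum_exp_mul_le {α : Type*} (s : Finset α) {x : α → ℝ} (hx : ∀ k ∈ s, x k ∈ Set.Icc 0 1)
    (l : ℝ) : ∑ k ∈ s, exp (l * x k) ≤ #s + (exp l - 1) * ∑ k ∈ s, x k := by
  have hchord : ∀ k ∈ s, exp (l * x k) ≤ 1 + (exp l - 1) * x k := fun k hk => by
    obtain ⟨h0, h1⟩ := hx k hk
    have := convexOn_exp.2 (Set.mem_univ 0) (Set.mem_univ l) (sub_nonneg.2 h1) h0 (by ring)
    simp only [smul_eq_mul, mul_zero, zero_add, exp_zero, mul_one] at this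
    rw [mul_comm l]
    linarith
  calc ∑ k ∈ s, exp (l * x k) ≤ ∑ k ∈ s, (1 + (exp l - 1) * x k) := sum_le_sum hchord
    _ = #s + (exp l - 1) * ∑ k ∈ s, x k := by rw [sum_add_distrib, mul_sum]; simp

theorem sum_Ico_exp_mul_invLevel_le {q : ℕ} (hq : 0 < q) (l : ℝ) :
    ∑ k ∈ Ico (0 : ℤ) q, exp (l * invLevel q 1 0 k) ≤
      q * exp ((exp l - 1) * ((q + 1) / (2 * q))) := by
  have hq' : (0 : ℝ) < q := by exact_mod_cast hq
  calc ∑ k ∈ Ico (0 : ℤ) q, exp (l * invLevel q 1 0 k)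
      ≤ #(Ico (0 : ℤ) q) + (exp l - 1) * ∑ k ∈ Ico (0 : ℤ) q, invLevel q 1 0 k :=
        sum_exp_mul_le _ (fun k _ => invLevel_one_mem_Icc q 0 k) l
    _ = q * ((exp l - 1) * ((q + 1) / (2 * q)) + 1) := by
        rw [sum_Ico_invLevel_one hq, Int.card_Ico, sub_zero, Int.toNat_natCast]
        field_simp
        ring
    _ ≤ q * exp ((exp l - 1) * ((q + 1) / (2 * q))) := by
        gcongr
        exact add_one_le_exp _

theorem card_filter_le_sum_invLevel_mul_exp_le {ι : Type*} [Fintype ι] {q : ι → ℕ}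
    (hq : Pairwise (Nat.Coprime on q)) (hq0 : ∀ i, 0 < q i) {l : ℝ} (hl : 0 ≤ l) (θ : ℝ) :
    #{t ∈ Ico (0 : ℤ) ((∏ i, q i : ℕ) : ℤ) | θ ≤ ∑ i, invLevel (q i) 1 0 t} * exp (l * θ) ≤
      (∏ i, q i : ℕ) * exp ((exp l - 1) * ∑ i, (q i + 1 : ℝ) / (2 * q i)) := by
  classical
  calc _ ≤ ∑ t ∈ Ico (0 : ℤ) ((∏ i, q i : ℕ) : ℤ), ∏ i, exp (l * invLevel (q i) 1 0 (t % q i)) := by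
        simp only [invLevel_emod, ← exp_sum, ← mul_sum]
        exact card_filter_le_mul_exp_le_sum_exp _ _ hl θ
    _ = ∏ i, ∑ k ∈ Ico (0 : ℤ) (q i), exp (l * invLevel (q i) 1 0 k) :=
        sum_Ico_prod_emod_eq_prod_sum hq fun i k => exp (l * invLevel (q i) 1 0 k)
    _ ≤ ∏ i, (q i * exp ((exp l - 1) * ((q i + 1) / (2 * q i)))) :=
        prod_le_prod (fun _ _ => sum_nonneg fun _ _ => (exp_pos _).le)
          fun i _ => sum_Ico_exp_mul_invLevel_le (hq0 i) l
    _ = _ := by rw [prod_mul_distrib, ← exp_sum, ← mul_sum, Nat.cast_prod]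

theorem exp_half_sub_one_mul_sub_le {ε x : ℝ} (hε0 : 0 < ε) (hε1 : ε < 1) (hεx : 2 ≤ ε * x) :
    (exp (ε / 2) - 1) * ((x + 1) / 2) - ε / 2 * ((1 / 2 + ε) * x) ≤ -(ε ^ 2) * x / 6 := by
  have hc : exp (ε / 2) - 1 ≤ ε / 2 + (ε / 2) ^ 2 := by
    have hquad := abs_exp_sub_one_sub_id_le (x := ε / 2) (abs_le.2 ⟨by linarith, by linarith⟩)
    linarith [(abs_le.1 hquad).2]
  have hx : 0 ≤ (x + 1) / 2 := by nlinarith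
  nlinarith [mul_le_mul_of_nonneg_right hc hx, mul_nonneg hε0.le (sub_nonneg.2 hεx),
    mul_nonneg hε0.le (sub_nonneg.2 hε1.le)]

theorem card_filter_half_add_le_sum_invLevel {n : ℕ} {q : Fin n → ℕ}
    (hq : Pairwise (Nat.Coprime on q)) (hq0 : ∀ i, 0 < q i) (hge : ∀ i, n ≤ q i)
    {ε : ℝ} (hε0 : 0 < ε) (hε1 : ε < 1) (hεn : 2 ≤ ε * n) :
    (#{t ∈ Ico (0 : ℤ) ((∏ i, q i : ℕ) : ℤ) | (1 / 2 + ε) * n ≤ ∑ i, invLevel (q i) 1 0 t} : ℝ) ≤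
      exp (-(ε ^ 2) * n / 6) * (∏ i, q i : ℕ) := by
  have hn : (0 : ℝ) < n := by nlinarith
  have hsum : ∑ i, (q i + 1 : ℝ) / (2 * q i) ≤ (n + 1) / 2 := by
    have hterm : ∀ i, (q i + 1 : ℝ) / (2 * q i) ≤ (n + 1) / (2 * n) := fun i => by
      have hqi : (0 : ℝ) < q i := by exact_mod_cast hq0 i
      have hnq : (n : ℝ) ≤ q i := by exact_mod_cast hge i
      rw [div_le_div_iff₀ (by positivity) (by positivity)]
      nlinarith
    calc ∑ i, (q i + 1 : ℝ) / (2 * q i) ≤ ∑ _i : Fin n, (n + 1 : ℝ) / (2 * n) :=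
          sum_le_sum fun i _ => hterm i
      _ = (n + 1) / 2 := by
          simp only [sum_const, card_univ, Fintype.card_fin, nsmul_eq_mul]
          field_simp
  have hc : 0 ≤ exp (ε / 2) - 1 := by linarith [one_le_exp (x := ε / 2) (by positivity)]
  have hbound := card_filter_le_sum_invLevel_mul_exp_le hq hq0 (l := ε / 2) (by positivity)
    ((1 / 2 + ε) * n)
  rw [← le_div_iff₀ (exp_pos _), mul_div_assoc, ← exp_sub] at hbound
  calc _ ≤ (∏ i, q i : ℕ) * exp ((exp (ε / 2) - 1) * ∑ i, (q i + 1 : ℝ) / (2 * q i) -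
        ε / 2 * ((1 / 2 + ε) * n)) := hbound
    _ ≤ (∏ i, q i : ℕ) * exp (-(ε ^ 2) * n / 6) := by
        gcongr
        exact (sub_le_sub_right (mul_le_mul_of_nonneg_left hsum hc) _).trans
          (exp_half_sub_one_mul_sub_le hε0 hε1 hεn)
    _ = _ := mul_comm _ _

theorem card_filter_piFinset_exists_le {ι α : Type*} [Fintype ι] [DecidableEq ι] [DecidableEq α]
    (s : Finset α) (P : α → Prop) [DecidablePred P] :
    #{x ∈ Fintype.piFinset fun _ : ι => s | ∃ m, P (x m)} ≤
      Fintype.card ι * #{a ∈ s | P a} * #s ^ (Fintype.card ι - 1) := by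
  have hfiber : ∀ m, #{x ∈ Fintype.piFinset fun _ : ι => s | P (x m)} =
      #{a ∈ s | P a} * #s ^ (Fintype.card ι - 1) := fun m => by
    have hupdate : {x ∈ Fintype.piFinset fun _ : ι => s | P (x m)} =
        Fintype.piFinset (update (fun _ => s) m (s.filter P)) := by
      rw [Fintype.piFinset_update_eq_filter_piFinset_mem _ _ (filter_subset P s)]
      exact filter_congr fun x hx => by simp [Fintype.mem_piFinset.1 hx m]
    rw [hupdate, Fintype.card_piFinset]
    simp only [apply_update (fun _ => card), prod_update_of_mem (mem_univ m), prod_const,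
      ← compl_eq_univ_sdiff, card_compl, card_singleton]
  calc _ ≤ #(univ.biUnion fun m : ι => {x ∈ Fintype.piFinset fun _ : ι => s | P (x m)}) :=
        card_le_card fun x hx => by
          obtain ⟨hx, m, hm⟩ := mem_filter.1 hx
          exact mem_biUnion.2 ⟨m, mem_univ m, mem_filter.2 ⟨hx, hm⟩⟩
    _ ≤ ∑ m : ι, #{x ∈ Fintype.piFinset fun _ : ι => s | P (x m)} := card_biUnion_le
    _ = _ := by simp only [hfiber, sum_const, card_univ, smul_eq_mul, mul_assoc]

open Classical in
theorem stmt5_general (ε : ℝ) (hε : ε ∈ Set.Ioo (0 : ℝ) 1) (n : ℕ)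
    (hn2 : 2 / ε ≤ (n : ℝ)) (p : Fin n → ℕ) (hp : ∀ i, (p i).Prime)
    (hinj : Function.Injective p) (hge : ∀ i, n ≤ p i) :
    (∀ τ : Fin n → ℤ, Imax p (fun _ => 1) τ = n) ∧
    (∀ M : ℕ, 0 < M →
      (((Fintype.piFinset fun _ : Fin M => Finset.Ico (0 : ℤ) ((∏ i, p i : ℕ) : ℤ)).filter
          (fun x => ∃ m, ((1 : ℝ) / 2 + ε) * Imax p (fun _ => 1) (fun _ => 0)
            ≤ ∑ i, invLevel (p i) 1 0 (x m))).card : ℝ)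
        ≤ M * Real.exp (-(ε ^ 2) * n / 6) * (∏ i, (p i : ℝ)) ^ M) := by
  obtain ⟨hε0, hε1⟩ := hε
  have hcop : Pairwise (Nat.Coprime on p) := fun i j hij =>
    (Nat.coprime_primes (hp i) (hp j)).2 (hinj.ne hij)
  have hp0 : ∀ i, 0 < p i := fun i => (hp i).pos
  have hImax : ∀ τ, Imax p (fun _ => 1) τ = n := by simpa using Imax_one_eq_card hcop hp0
  refine ⟨hImax, fun M hM => ?_⟩
  have hεn : 2 ≤ ε * n := by rwa [div_le_iff₀' hε0] at hn2
  set Λ := ∏ i, p i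
  rw [hImax, ← Nat.cast_prod]
  calc _ ≤ ((M * #{t ∈ Ico (0 : ℤ) Λ | (1 / 2 + ε) * n ≤ ∑ i, invLevel (p i) 1 0 t} *
        Λ ^ (M - 1) : ℕ) : ℝ) := by
        have hunion := card_filter_piFinset_exists_le (ι := Fin M) (Ico (0 : ℤ) Λ)
          fun t => (1 / 2 + ε) * n ≤ ∑ i, invLevel (p i) 1 0 t
        rw [Fintype.card_fin, Int.card_Ico, sub_zero, Int.toNat_natCast] at hunion
        exact_mod_cast hunion
    _ ≤ M * (exp (-(ε ^ 2) * n / 6) * Λ) * Λ ^ (M - 1) := by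
        push_cast
        gcongr
        exact card_filter_half_add_le_sum_invLevel hcop hp0 hge hε0 hε1 hεn
    _ = M * exp (-(ε ^ 2) * n / 6) * Λ ^ M := by
        rw [mul_assoc _ _ ((Λ : ℝ) ^ (M - 1)), mul_assoc (exp _), ← pow_succ',
          Nat.sub_add_cancel hM, mul_assoc]

open Classical in
/-- For the instance with `T_i = p_i` (distinct primes ≥ n ≥ 2/ε) and `H_i = 1`:
(a) every shift vector has peak inventory level `n` (so `τ* = 0` is optimal), and
(b) the number of `M`-tuples of sample points in `{0,…,Λ−1}` whose sampled maximum
reaches `(1/2+ε)·I_max(τ*)` is at most `M·exp(−ε²n/6)·Λ^M`. -/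
theorem stmt5 (ε : ℝ) (hε : ε ∈ Set.Ioo (0 : ℝ) 1) (n : ℕ) (hn : 0 < n)
    (hn2 : 2 / ε ≤ (n : ℝ)) (p : Fin n → ℕ) (hp : ∀ i, (p i).Prime)
    (hinj : Function.Injective p) (hge : ∀ i, n ≤ p i) :
    (∀ τ : Fin n → ℤ, Imax p (fun _ => 1) τ = n) ∧
    (∀ M : ℕ, 0 < M →
      (((Fintype.piFinset fun _ : Fin M => Finset.Ico (0 : ℤ) ((∏ i, p i : ℕ) : ℤ)).filter
          (fun x => ∃ m, ((1 : ℝ) / 2 + ε) * Imax p (fun _ => 1) (fun _ => 0)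
            ≤ ∑ i, invLevel (p i) 1 0 (x m))).card : ℝ)
        ≤ M * Real.exp (-(ε ^ 2) * n / 6) * (∏ i, (p i : ℝ)) ^ M) :=
  stmt5_general ε hε n hn2 p hp hinj hge
end

section
/- For every prime power q and every integer r with 2 ≤ r ≤ q, there exists a family F of subsets of a ground set of size q² such that |F| ≥ q^r, every member of F has exactly q elements, and any two distinct members of F intersect in at most r − 1 elements. -/
/-! Over a finite field `K` with `q` elements, take the graphs `{(x, f x) : x ∈ K} ⊆ K × K` of the
`q ^ r` polynomial functions of degree `< r`. Each graph has `q` points, and two distinct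
graphs meet only where the two polynomials agree, i.e. at the roots of their nonzero difference,
of which there are at most `r - 1`. -/

open Finset Polynomial

def IsSparseFamily {α : Type*} [DecidableEq α] (F : Finset (Finset α)) (n k : ℕ) : Prop :=
  (∀ S ∈ F, #S = n) ∧ ∀ S ∈ F, ∀ S' ∈ F, S ≠ S' → #(S ∩ S') ≤ k

theorem IsSparseFamily.map {α β : Type*} [DecidableEq α] [DecidableEq β]
    {F : Finset (Finset α)} {n k : ℕ} (hF : IsSparseFamily F n k) (e : α ↪ β) :
    IsSparseFamily (F.map (mapEmbedding e).toEmbedding) n k := by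
  refine ⟨?_, ?_⟩
  · simp only [mem_map, RelEmbedding.coe_toEmbedding, mapEmbedding_apply]
    rintro _ ⟨S, hS, rfl⟩
    rw [card_map, hF.1 S hS]
  · simp only [mem_map, RelEmbedding.coe_toEmbedding, mapEmbedding_apply]
    rintro _ ⟨S, hS, rfl⟩ _ ⟨S', hS', rfl⟩ hne
    rw [← map_inter, card_map]
    exact hF.2 S hS S' hS' (by rintro rfl; exact hne rfl)

section Graph

variable {α β : Type*}

theorem graph_injective (f : α → β) : Function.Injective fun x => (x, f x) :=
  fun _ _ h => congrArg Prod.fst h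

variable [Fintype α] [DecidableEq α] [DecidableEq β]

def graphFinset (f : α → β) : Finset (α × β) :=
  univ.image fun x => (x, f x)

theorem card_graphFinset (f : α → β) : #(graphFinset f) = Fintype.card α := by
  rw [graphFinset, card_image_of_injective _ (graph_injective f), card_univ]

theorem card_graphFinset_inter (f g : α → β) :
    #(graphFinset f ∩ graphFinset g) = #{x | f x = g x} := by
  have : graphFinset f ∩ graphFinset g = ({x | f x = g x} : Finset α).image fun x => (x, f x) := by
    ext ⟨a, b⟩
    simp only [graphFinset, mem_inter, mem_image, mem_univ, true_and, mem_filter, Prod.mk.injEq]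
    grind
  rw [this, card_image_of_injective _ (graph_injective f)]

theorem exists_isSparseFamily_graphs {ι : Type*} [Fintype ι] (φ : ι → α → β) {k : ℕ}
    (hk : k < Fintype.card α) (hφ : ∀ i j, i ≠ j → #{x | φ i x = φ j x} ≤ k) :
    ∃ F : Finset (Finset (α × β)), #F = Fintype.card ι ∧ IsSparseFamily F (Fintype.card α) k := by
  -- equal graphs would make `φ i` and `φ j` agree at all `|α| > k` points
  have hinj : Function.Injective fun i => graphFinset (φ i) := by
    intro i j hij
    by_contra hne
    have := hφ i j hne
    rw [← card_graphFinset_inter, show graphFinset (φ i) = graphFinset (φ j) from hij, inter_self,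
      card_graphFinset] at this
    omega
  refine ⟨univ.image fun i => graphFinset (φ i), by rw [card_image_of_injective _ hinj, card_univ],
    ?_, ?_⟩
  · simp only [mem_image, mem_univ, true_and]
    rintro _ ⟨i, rfl⟩
    exact card_graphFinset _
  · simp only [mem_image, mem_univ, true_and]
    rintro _ ⟨i, rfl⟩ _ ⟨j, rfl⟩ hne
    rw [card_graphFinset_inter]
    exact hφ i j (by rintro rfl; exact hne rfl)

end Graph

section Polynomial

variable {R : Type*} [CommRing R] [IsDomain R] [Fintype R] [DecidableEq R]

theorem card_filter_eval_eq_lt_of_mem_degreeLT {n : ℕ} {p p' : R[X]} (hp : p ∈ degreeLT R n)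
    (hp' : p' ∈ degreeLT R n) (hne : p ≠ p') : #{x | p.eval x = p'.eval x} < n := by
  have hsub : p - p' ≠ 0 := sub_ne_zero.mpr hne
  have hroots : ({x | p.eval x = p'.eval x} : Finset R).val ⊆ (p - p').roots := by
    intro x hx
    rw [mem_roots hsub, IsRoot, eval_sub, sub_eq_zero]
    exact (mem_filter.mp hx).2
  calc #{x | p.eval x = p'.eval x} ≤ (p - p').natDegree := card_le_degree_of_subset_roots hroots
    _ < n := (natDegree_lt_iff_degree_lt hsub).mpr
        (mem_degreeLT.mp (Submodule.sub_mem _ hp hp'))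

variable (R) in
theorem exists_isSparseFamily_polynomial_graphs {r : ℕ} (hr : r ≤ Fintype.card R) :
    ∃ F : Finset (Finset (R × R)),
      #F = Fintype.card R ^ r ∧ IsSparseFamily F (Fintype.card R) (r - 1) := by
  let φ : (Fin r → R) → R → R := fun c x => ((degreeLTEquiv R r).symm c : R[X]).eval x
  have hφ : ∀ c c', c ≠ c' → #{x | φ c x = φ c' x} ≤ r - 1 := by
    intro c c' hne
    have := card_filter_eval_eq_lt_of_mem_degreeLT ((degreeLTEquiv R r).symm c).2
      ((degreeLTEquiv R r).symm c').2
      (fun h => hne ((degreeLTEquiv R r).symm.injective (Subtype.ext h)))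
    exact Nat.le_sub_one_of_lt this
  have hcard : Fintype.card R ^ r = Fintype.card (Fin r → R) := by simp
  rw [hcard]
  exact exists_isSparseFamily_graphs φ (by have := Fintype.card_pos (α := R); omega) hφ

end Polynomial

theorem stmt6_general (q r : ℕ) (hq : IsPrimePow q) (hrq : r ≤ q) :
    ∃ F : Finset (Finset (Fin (q ^ 2))),
      q ^ r ≤ F.card ∧ (∀ S ∈ F, S.card = q) ∧
      (∀ S ∈ F, ∀ S' ∈ F, S ≠ S' → (S ∩ S').card ≤ r - 1) := by
  classical
  obtain ⟨p, n, hp, hn, rfl⟩ := hq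
  have : Fact p.Prime := ⟨hp.nat_prime⟩
  let K := GaloisField p n
  have : Fintype K := Fintype.ofFinite K
  have hK : Fintype.card K = p ^ n := by
    rw [← Nat.card_eq_fintype_card]; exact GaloisField.card p n hn.ne'
  obtain ⟨F, hFcard, hF⟩ := exists_isSparseFamily_polynomial_graphs K (hK ▸ hrq)
  let e : K × K ≃ Fin ((p ^ n) ^ 2) := Fintype.equivFinOfCardEq (by simp [hK, sq])
  rw [hK] at hFcard hF
  obtain ⟨hsize, hinter⟩ := hF.map e.toEmbedding
  exact ⟨_, by rw [card_map, hFcard], hsize, hinter⟩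

/-- For every prime power `q` and `2 ≤ r ≤ q`, there is a family of at least `q^r`
many `q`-element subsets of a ground set of size `q²`, any two distinct members of
which intersect in at most `r − 1` elements. -/
theorem stmt6 (q r : ℕ) (hq : IsPrimePow q) (hr : 2 ≤ r) (hrq : r ≤ q) :
    ∃ F : Finset (Finset (Fin (q ^ 2))),
      q ^ r ≤ F.card ∧ (∀ S ∈ F, S.card = q) ∧
      (∀ S ∈ F, ∀ S' ∈ F, S ≠ S' → (S ∩ S').card ≤ r - 1) :=
  stmt6_general q r hq hrq
end

section
/- Let ε ∈ (0,1) and consider a discrete inventory staggering instance with n items whose time intervals T_1, …, T_n admit primes p_1, …, p_n such that for every i ∈ [n]: p_i ≥ 1/ε, p_i divides T_i, and p_i does not divide T_k for every k ≠ i. Then every integer shift vector τ ∈ ℤ^n satisfies I_max(τ) ≥ (1 − ε)·H_Σ; in particular, OPT^disc ≥ (1 − ε)·H_Σ. -/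
/-!
Put `m i = T i / p i`. An item replenished at most `m i` steps before `t` still holds at least
`(1 - 1/p i) H i ≥ (1 - ε) H i`, so it suffices to find one time `t` at which every item has been
replenished within its last `m i` steps. Take `t = (∏ k, m k) * u`: it is a multiple of each
`m i`, and `t / m i = (∏ k ≠ i, m k) * u` with the cofactor invertible modulo `p i`, since `p i`
divides no `T k` with `k ≠ i`. The Chinese remainder theorem for the distinct primes `p i` then
chooses `u` so that, modulo `T i = p i * m i`, `t` is the first multiple of `m i` after `τ i`,
for every `i`.
-/

open Finset Function

theorem exists_int_forall_intCast_eq {ι : Type*} [Fintype ι] {p : ι → ℕ}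
    (hp : Pairwise (Nat.Coprime on p)) (x : ∀ i, ZMod (p i)) :
    ∃ u : ℤ, ∀ i, (u : ZMod (p i)) = x i := by
  refine ⟨((ZMod.prodEquivPi p hp).symm x).cast, fun i => ?_⟩
  rw [← map_intCast (ZMod.castHom (dvd_prod_of_mem p (mem_univ i)) (ZMod (p i))),
    ZMod.intCast_zmod_cast, ← ZMod.prodEquivPi_apply p hp, RingEquiv.apply_symm_apply]

theorem Int.mul_sub_emod_mul_le {p m s τ : ℤ} (hp : 0 ≤ p) (hm : 0 < m)
    (hs : s ≡ τ / m + 1 [ZMOD p]) : (m * s - τ) % (p * m) ≤ m := by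
  have hmod : m * s - τ ≡ m - τ % m [ZMOD p * m] := by
    convert (hs.mul_left' (c := m)).sub_right τ using 1
    · ring
    · rw [Int.emod_def]; ring
  have hrem : 0 ≤ τ % m := Int.emod_nonneg τ hm.ne'
  have hquot : 0 ≤ p * m * ((m - τ % m) / (p * m)) :=
    mul_nonneg (by positivity)
      (Int.ediv_nonneg (by linarith [Int.emod_lt_of_pos τ hm]) (by positivity))
  rw [hmod, Int.emod_def (m - τ % m)]
  linarith

theorem exists_forall_sub_emod_mul_le {ι : Type*} [Fintype ι] [DecidableEq ι] {p m : ι → ℕ}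
    (hp : Pairwise (Nat.Coprime on p)) (hpm : ∀ i k, k ≠ i → (p i).Coprime (m k))
    (hm : ∀ i, 0 < m i) (τ : ι → ℤ) :
    ∃ t : ℤ, ∀ i, (t - τ i) % (p i * m i) ≤ m i := by
  set C : ι → ℕ := fun i => ∏ k ∈ univ.erase i, m k
  have hC : ∀ i, (C i).Coprime (p i) := fun i =>
    Nat.Coprime.prod_left fun k hk => (hpm i k (ne_of_mem_erase hk)).symm
  obtain ⟨u, hu⟩ := exists_int_forall_intCast_eq hp
    fun i => ((τ i / m i + 1 : ℤ) : ZMod (p i)) * (C i : ZMod (p i))⁻¹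
  refine ⟨(∏ k, m k : ℕ) * u, fun i => ?_⟩
  rw [← mul_prod_erase univ m (mem_univ i), Nat.cast_mul, mul_assoc]
  refine Int.mul_sub_emod_mul_le (by positivity) (by exact_mod_cast hm i) ?_
  rw [← ZMod.intCast_eq_intCast_iff, Int.cast_mul, Int.cast_natCast, hu i, mul_left_comm,
    ZMod.coe_mul_inv_eq_one _ (hC i), mul_one]

theorem exists_forall_sub_emod_mul_le_of_prime_dvd {ι : Type*} [Fintype ι] {T p : ι → ℕ}
    (hT : ∀ i, 0 < T i) (hp : ∀ i, (p i).Prime) (hdvd : ∀ i, p i ∣ T i)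
    (hnd : ∀ i k, k ≠ i → ¬ p i ∣ T k) (τ : ι → ℤ) :
    ∃ t : ℤ, ∀ i, (t - τ i) % T i * p i ≤ T i := by
  classical
  have hp_coprime : Pairwise (Nat.Coprime on p) := fun i k hik =>
    (Nat.coprime_primes (hp i) (hp k)).2 fun h => hnd i k hik.symm (h ▸ hdvd k)
  have hp_coprime_div : ∀ i k, k ≠ i → (p i).Coprime (T k / p k) := fun i k hki =>
    ((Nat.Prime.coprime_iff_not_dvd (hp i)).2 (hnd i k hki)).coprime_dvd_right
      (Nat.div_dvd_of_dvd (hdvd k))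
  have hpos : ∀ i, 0 < T i / p i := fun i =>
    Nat.div_pos (Nat.le_of_dvd (hT i) (hdvd i)) (hp i).pos
  obtain ⟨t, ht⟩ := exists_forall_sub_emod_mul_le hp_coprime hp_coprime_div hpos τ
  refine ⟨t, fun i => ?_⟩
  have hTi : (T i : ℤ) = p i * (T i / p i : ℕ) := by
    exact_mod_cast (Nat.mul_div_cancel' (hdvd i)).symm
  have := mul_le_mul_of_nonneg_right (ht i) (Int.natCast_nonneg (p i))
  rw [hTi]
  linarith

theorem one_sub_mul_le_invLevel {T H : ℕ} {τ t : ℤ} {r : ℝ} (hT : 0 < T)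
    (h : (((t - τ) % T : ℤ) : ℝ) ≤ r * T) : (1 - r) * H ≤ invLevel T H τ t := by
  rw [invLevel, mul_comm]
  gcongr
  rwa [div_le_iff₀ (by exact_mod_cast hT)]

theorem invLevel_emod_of_dvd {T L : ℕ} (H : ℕ) (τ t : ℤ) (h : T ∣ L) :
    invLevel T H τ (t % L) = invLevel T H τ t := by
  rw [invLevel, invLevel, Int.sub_emod, Int.emod_emod_of_dvd t (Int.natCast_dvd_natCast.2 h),
    ← Int.sub_emod]

section Peak

variable {ι : Type*} [Fintype ι] {T : ι → ℕ}

theorem cycleLen_pos (hT : ∀ i, 0 < T i) : 0 < cycleLen T :=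
  Nat.pos_of_ne_zero fun h => by
    obtain ⟨i, -, hi⟩ := Finset.lcm_eq_zero_iff.1 h
    exact (hT i).ne' hi

theorem totalInv_emod_cycleLen (H : ι → ℕ) (τ : ι → ℤ) (t : ℤ) :
    totalInv T H τ (t % cycleLen T) = totalInv T H τ t :=
  sum_congr rfl fun i _ => invLevel_emod_of_dvd _ _ _ (dvd_lcm (mem_univ i))

theorem totalInv_le_Imax (hT : ∀ i, 0 < T i) (H : ι → ℕ) (τ : ι → ℤ) (t : ℤ) :
    totalInv T H τ t ≤ Imax T H τ := by
  have hΛ : (0 : ℤ) < cycleLen T := by exact_mod_cast cycleLen_pos hT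
  rw [← totalInv_emod_cycleLen]
  exact le_csSup ((Set.finite_Ico _ _).image _).bddAbove
    ⟨_, ⟨Int.emod_nonneg _ hΛ.ne', Int.emod_lt_of_pos _ hΛ⟩, rfl⟩

end Peak

theorem stmt9_general {n : ℕ} (T H : Fin n → ℕ) (hT : ∀ i, 0 < T i)
    (ε : ℝ) (hε : ε ∈ Set.Ioo (0 : ℝ) 1) (p : Fin n → ℕ) (hp : ∀ i, (p i).Prime)
    (hpe : ∀ i, 1 / ε ≤ (p i : ℝ)) (hdvd : ∀ i, p i ∣ T i)
    (hnd : ∀ i k, k ≠ i → ¬ p i ∣ T k) :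
    (∀ τ : Fin n → ℤ, (1 - ε) * ∑ i, (H i : ℝ) ≤ Imax T H τ) ∧
    (1 - ε) * ∑ i, (H i : ℝ) ≤ OPTdisc T H := by
  have peak_ge : ∀ τ : Fin n → ℤ, (1 - ε) * ∑ i, (H i : ℝ) ≤ Imax T H τ := by
    intro τ
    obtain ⟨t, ht⟩ := exists_forall_sub_emod_mul_le_of_prime_dvd hT hp hdvd hnd τ
    have hlevel : ∀ i, (((t - τ i) % T i : ℤ) : ℝ) ≤ ε * T i := fun i => by
      have hεp : 1 ≤ p i * ε := (div_le_iff₀ hε.1).1 (hpe i)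
      have hphase : (((t - τ i) % T i : ℤ) : ℝ) * p i ≤ T i := by exact_mod_cast ht i
      have hnonneg : (0 : ℝ) ≤ ((t - τ i) % T i : ℤ) := by
        exact_mod_cast Int.emod_nonneg _ (by exact_mod_cast (hT i).ne')
      linarith [mul_le_mul_of_nonneg_left hεp hnonneg, mul_le_mul_of_nonneg_left hphase hε.1.le]
    calc (1 - ε) * ∑ i, (H i : ℝ) = ∑ i, (1 - ε) * H i := mul_sum _ _ _
      _ ≤ totalInv T H τ t := sum_le_sum fun i _ => one_sub_mul_le_invLevel (hT i) (hlevel i)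
      _ ≤ Imax T H τ := totalInv_le_Imax hT H τ t
  exact ⟨peak_ge, le_csInf (Set.range_nonempty _) (Set.forall_mem_range.2 peak_ge)⟩

/-- If each time interval `T_i` has a prime divisor `p_i ≥ 1/ε` dividing no other
interval, then every integer shift vector has peak inventory level at least
`(1−ε)·H_Σ`; in particular `OPT^disc ≥ (1−ε)·H_Σ`. -/
theorem stmt9 {n : ℕ} (T H : Fin n → ℕ) (hT : ∀ i, 0 < T i) (hH : ∀ i, 0 < H i)
    (ε : ℝ) (hε : ε ∈ Set.Ioo (0 : ℝ) 1) (p : Fin n → ℕ) (hp : ∀ i, (p i).Prime)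
    (hpe : ∀ i, 1 / ε ≤ (p i : ℝ)) (hdvd : ∀ i, p i ∣ T i)
    (hnd : ∀ i k, k ≠ i → ¬ p i ∣ T k) :
    (∀ τ : Fin n → ℤ, (1 - ε) * ∑ i, (H i : ℝ) ≤ Imax T H τ) ∧
    (1 - ε) * ∑ i, (H i : ℝ) ≤ OPTdisc T H :=
  stmt9_general T H hT ε hε p hp hpe hdvd hnd
end

section
/- Let ε ∈ (0,1) with 1/ε an integer, and let I be any discrete inventory staggering instance. Then there exists an ordered partition (S_1, …, S_M, S_∞) of the item set [n] such that: (1) max_{i∈S_m} T_i ≤ (1/ε)^{1/ε}·min_{i∈S_m} T_i for every m ∈ [M]; (2) T_{i1} ≤ ε·T_{i2} for every i1 ∈ S_{m1} and i2 ∈ S_{m2} with 1 ≤ m1 < m2 ≤ M; and (3) Σ_{i ∈ S_∞} H_i ≤ ε·H_Σ. -/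
/-!
Write `k = 1/ε` and give item `i` the level `⌊log_k T_i⌋`. Some residue class of levels modulo `k`
carries at most a `1/k` share of `H_Σ` (pigeonhole); its items form `S_∞`. Deleting these levels
cuts the remaining ones into runs of at most `k - 1` consecutive levels, and the runs, in increasing
order, are the blocks `S_m`. Inside a block levels differ by less than `k`, so intervals differ by
less than a factor `k^k`; items of different blocks are at least two levels apart, so their
intervals differ by at least a factor `k`.
-/

open Finset

theorem Nat.pow_mul_lt_pow_mul_of_log_add_lt {k a b i j : ℕ} (hk : 1 < k) (hb : b ≠ 0)
    (h : Nat.log k a + i < Nat.log k b + j) : k ^ i * a < k ^ j * b :=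
  calc k ^ i * a < k ^ i * k ^ (Nat.log k a + 1) :=
        Nat.mul_lt_mul_of_pos_left (Nat.lt_pow_succ_log_self hk a) (by positivity)
    _ = k ^ (Nat.log k a + i + 1) := by ring
    _ ≤ k ^ (Nat.log k b + j) := Nat.pow_le_pow_right (by omega) h
    _ = k ^ j * k ^ Nat.log k b := by ring
    _ ≤ k ^ j * b := Nat.mul_le_mul_left _ (Nat.pow_log_le_self k hb)

/-- The index of the window of `k` consecutive levels containing `L`, where windows end at the
levels `≡ r [MOD k]`. -/
def blockIndex (k r L : ℕ) : ℕ := (L + (k - 1 - r)) / k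

section blockIndex

variable {k r L₁ L₂ : ℕ}

theorem lt_add_of_blockIndex_eq (hk : 0 < k) (h : blockIndex k r L₁ = blockIndex k r L₂) :
    L₁ < L₂ + k := by
  have h₁ := Nat.lt_div_mul_add (a := L₁ + (k - 1 - r)) hk
  have h₂ := Nat.div_mul_le_self (L₂ + (k - 1 - r)) k
  rw [← blockIndex, h] at h₁
  rw [← blockIndex] at h₂
  omega

theorem add_one_lt_of_blockIndex_lt (hr : r < k) (hL₁ : L₁ % k ≠ r)
    (h : blockIndex k r L₁ < blockIndex k r L₂) : L₁ + 1 < L₂ := by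
  have h₁ := Nat.div_add_mod' (L₁ + (k - 1 - r)) k
  have h₂ := Nat.div_mul_le_self (L₂ + (k - 1 - r)) k
  have hmod := Nat.mod_lt (L₁ + (k - 1 - r)) (by omega : 0 < k)
  rw [← blockIndex] at h₁ h₂
  have hgap := Nat.mul_le_mul_right k (Nat.succ_le_of_lt h)
  rw [Nat.succ_mul] at hgap
  have not_top : (L₁ + (k - 1 - r)) % k ≠ k - 1 := by
    intro htop
    apply hL₁
    have : L₁ = r + blockIndex k r L₁ * k := by omega
    rw [this, Nat.add_mul_mod_self_right, Nat.mod_eq_of_lt hr]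
  omega

end blockIndex

theorem exists_ordered_partition_of_fibers {ι : Type*} [Fintype ι] [DecidableEq ι]
    (b : ι → ℕ) (D : Finset ι) :
    ∃ (M : ℕ) (S : Fin M → Finset ι),
      (∀ m₁ m₂, m₁ ≠ m₂ → Disjoint (S m₁) (S m₂)) ∧ (∀ m, Disjoint (S m) D) ∧
      univ.biUnion S ∪ D = univ ∧ ∀ m, ∀ i ∈ S m, i ∉ D ∧ b i = m := by
  refine ⟨univ.sup b + 1, fun m => {i | i ∉ D ∧ b i = m}, ?_, ?_, ?_, ?_⟩
  · intro m₁ m₂ hne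
    refine disjoint_left.2 fun i h₁ h₂ => hne (Fin.ext ?_)
    rw [mem_filter] at h₁ h₂
    exact h₁.2.2.symm.trans h₂.2.2
  · exact fun m => disjoint_left.2 fun i hi => (mem_filter.1 hi).2.1
  · refine eq_univ_of_forall fun i => ?_
    by_cases hi : i ∈ D
    · exact mem_union_right _ hi
    · refine mem_union_left _ (mem_biUnion.2 ⟨⟨b i, Nat.lt_succ_of_le (le_sup (mem_univ i))⟩,
        mem_univ _, mem_filter.2 ⟨mem_univ i, hi, rfl⟩⟩)
  · exact fun m i hi => (mem_filter.1 hi).2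

theorem stmt18_general {n : ℕ} (T H : Fin n → ℕ) (hT : ∀ i, 0 < T i)
    (ε : ℝ) (hε : ε ∈ Set.Ioo (0 : ℝ) 1) (hεint : ∃ k : ℕ, (k : ℝ) * ε = 1) :
    ∃ (M : ℕ) (S : Fin M → Finset (Fin n)) (Sinf : Finset (Fin n)),
      (∀ m1 m2, m1 ≠ m2 → Disjoint (S m1) (S m2)) ∧
      (∀ m, Disjoint (S m) Sinf) ∧
      (Finset.univ.biUnion S ∪ Sinf = Finset.univ) ∧
      (∀ m, ∀ i1 ∈ S m, ∀ i2 ∈ S m,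
        (T i1 : ℝ) ≤ (1 / ε) ^ ((1 : ℝ) / ε) * (T i2 : ℝ)) ∧
      (∀ m1 m2 : Fin M, m1 < m2 →
        ∀ i1 ∈ S m1, ∀ i2 ∈ S m2, (T i1 : ℝ) ≤ ε * (T i2 : ℝ)) ∧
      (∑ i ∈ Sinf, (H i : ℝ)) ≤ ε * ∑ i, (H i : ℝ) := by
  obtain ⟨k, hk⟩ := hεint
  have hk1 : 1 < k := by exact_mod_cast (show (1 : ℝ) < k by nlinarith [hε.1, hε.2])
  have hk0 : (0 : ℝ) < k := by positivity
  obtain rfl : ε = 1 / k := by rw [eq_div_iff hk0.ne']; linarith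
  set L : Fin n → ℕ := fun i => Nat.log k (T i)
  obtain ⟨r, hr, hD⟩ := exists_sum_fiber_le_of_maps_to_of_sum_le_nsmul
    (f := fun i => L i % k) (w := fun i => (H i : ℝ)) (b := 1 / k * ∑ i, (H i : ℝ))
    (fun i _ => mem_range.2 (Nat.mod_lt _ (by omega))) (nonempty_range_iff.2 (by omega))
    (by rw [card_range, nsmul_eq_mul]; field_simp; rfl)
  obtain ⟨M, S, hdisj, hdisjD, hcover, hS⟩ :=
    exists_ordered_partition_of_fibers (fun i => blockIndex k r (L i)) {i | L i % k = r}
  refine ⟨M, S, _, hdisj, hdisjD, hcover, ?_, ?_, hD⟩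
  · intro m i₁ h₁ i₂ h₂
    have hlevel : L i₁ < L i₂ + k :=
      lt_add_of_blockIndex_eq (by omega) ((hS m i₁ h₁).2.trans (hS m i₂ h₂).2.symm)
    have hT₁₂ : T i₁ < k ^ k * T i₂ := by
      simpa using Nat.pow_mul_lt_pow_mul_of_log_add_lt (i := 0) hk1 (hT i₂).ne' (by simpa)
    rw [one_div_one_div, Real.rpow_natCast]
    exact_mod_cast hT₁₂.le
  · intro m₁ m₂ hm i₁ h₁ i₂ h₂
    have hlevel : L i₁ + 1 < L i₂ := add_one_lt_of_blockIndex_lt (mem_range.1 hr)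
      (by simpa using (hS m₁ i₁ h₁).1) (by rw [(hS m₁ i₁ h₁).2, (hS m₂ i₂ h₂).2]; exact hm)
    have hT₁₂ : k * T i₁ < T i₂ := by
      simpa using Nat.pow_mul_lt_pow_mul_of_log_add_lt (i := 1) (j := 0) hk1 (hT i₂).ne' hlevel
    rw [one_div_mul_eq_div, le_div_iff₀' hk0]
    exact_mod_cast hT₁₂.le

/-- Existence of well-separated partitions: for every `ε ∈ (0,1)` with `1/ε` an
integer, every instance admits an ordered partition `(S_1, …, S_M, S_∞)` of its item
set satisfying the width property (within each `S_m`, intervals differ by a factor of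
at most `(1/ε)^{1/ε}`), the separation property (`T_{i1} ≤ ε·T_{i2}` across blocks
`m1 < m2`), and negligibility of `S_∞` (`H(S_∞) ≤ ε·H_Σ`). -/
theorem stmt18 {n : ℕ} (T H : Fin n → ℕ) (hT : ∀ i, 0 < T i) (hH : ∀ i, 0 < H i)
    (ε : ℝ) (hε : ε ∈ Set.Ioo (0 : ℝ) 1) (hεint : ∃ k : ℕ, (k : ℝ) * ε = 1) :
    ∃ (M : ℕ) (S : Fin M → Finset (Fin n)) (Sinf : Finset (Fin n)),
      (∀ m1 m2, m1 ≠ m2 → Disjoint (S m1) (S m2)) ∧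
      (∀ m, Disjoint (S m) Sinf) ∧
      (Finset.univ.biUnion S ∪ Sinf = Finset.univ) ∧
      (∀ m, ∀ i1 ∈ S m, ∀ i2 ∈ S m,
        (T i1 : ℝ) ≤ (1 / ε) ^ ((1 : ℝ) / ε) * (T i2 : ℝ)) ∧
      (∀ m1 m2 : Fin M, m1 < m2 →
        ∀ i1 ∈ S m1, ∀ i2 ∈ S m2, (T i1 : ℝ) ≤ ε * (T i2 : ℝ)) ∧
      (∑ i ∈ Sinf, (H i : ℝ)) ≤ ε * ∑ i, (H i : ℝ) :=
  stmt18_general T H hT ε hε hεint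
end

section
/- Let T_1, …, T_n be pairwise coprime positive integers defining a continuous inventory staggering instance, and let T_min = min_{i∈[n]} T_i. Then every real shift vector τ ∈ ℝ^n satisfies I_max(τ) ≥ (1 − 1/T_min)·H_Σ; in particular, OPT^cont ≥ (1 − 1/T_min)·H_Σ. -/
/-!
At an integer time `k` the level of item `i` is `H i * (1 - fract ((k - τ i) / T i))`, and if
`k ≡ ⌈τ i⌉ (mod T i)` this fractional part equals `(⌈τ i⌉ - τ i) / T i < 1 / T i`. For pairwise
coprime intervals the Chinese remainder theorem provides one integer `k` with all these
congruences at once, so at time `k` every item holds at least a `1 - 1 / T i` share of its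
ordering quantity.
-/

noncomputable def cInvLevel (T H : ℕ) (τ t : ℝ) : ℝ :=
  (H : ℝ) * (1 - Int.fract ((t - τ) / (T : ℝ)))

noncomputable def cImax {ι : Type*} [Fintype ι] (T H : ι → ℕ) (τ : ι → ℝ) : ℝ :=
  ⨆ t : ℝ, ∑ i, cInvLevel (T i) (H i) (τ i) t

noncomputable def OPTcont {ι : Type*} [Fintype ι] (T H : ι → ℕ) : ℝ :=
  ⨅ τ : ι → ℝ, cImax T H τ

open Finset Function

theorem Int.exists_forall_dvd_sub_of_pairwise_coprime {ι : Type*} [Finite ι] {T : ι → ℕ}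
    (hcop : Pairwise (Nat.Coprime on T)) (r : ι → ℤ) :
    ∃ k : ℤ, ∀ i, (T i : ℤ) ∣ k - r i := by
  have hI : Pairwise (IsCoprime on fun i => Ideal.span {(T i : ℤ)}) := fun i j hij =>
    (Ideal.isCoprime_span_singleton_iff _ _).mpr (Nat.isCoprime_iff_coprime.mpr (hcop hij))
  simpa only [Ideal.mem_span_singleton] using Ideal.exists_forall_sub_mem_ideal hI r

theorem Int.fract_sub_div_le_one_div {T : ℕ} (hT : 0 < T) {k : ℤ} {τ : ℝ}
    (hk : (T : ℤ) ∣ k - ⌈τ⌉) : Int.fract ((k - τ) / T) ≤ 1 / T := by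
  obtain ⟨m, hm⟩ := hk
  have hTR : (0 : ℝ) < T := Nat.cast_pos.mpr hT
  have hgap₀ : 0 ≤ (⌈τ⌉ : ℝ) - τ := sub_nonneg.mpr (Int.le_ceil τ)
  have hgap₁ : (⌈τ⌉ : ℝ) - τ < 1 := sub_lt_iff_lt_add'.mpr (Int.ceil_lt_add_one τ)
  have hsplit : ((k : ℝ) - τ) / T = m + ((⌈τ⌉ : ℝ) - τ) / T := by
    have hmR : (k : ℝ) - ⌈τ⌉ = T * m := by exact_mod_cast hm
    field_simp
    linarith
  have hsmall : ((⌈τ⌉ : ℝ) - τ) / T < 1 :=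
    (div_lt_one hTR).mpr (hgap₁.trans_le (Nat.one_le_cast.mpr hT))
  rw [hsplit, Int.fract_intCast_add, Int.fract_eq_self.mpr ⟨div_nonneg hgap₀ hTR.le, hsmall⟩]
  exact div_le_div_of_nonneg_right hgap₁.le hTR.le

theorem cInvLevel_le (T H : ℕ) (τ t : ℝ) : cInvLevel T H τ t ≤ H :=
  mul_le_of_le_one_right (Nat.cast_nonneg H) (sub_le_self 1 (Int.fract_nonneg _))

theorem mul_one_sub_one_div_le_cInvLevel {T : ℕ} (hT : 0 < T) (H : ℕ) {k : ℤ} {τ : ℝ}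
    (hk : (T : ℤ) ∣ k - ⌈τ⌉) : (H : ℝ) * (1 - 1 / T) ≤ cInvLevel T H τ k :=
  mul_le_mul_of_nonneg_left (sub_le_sub_left (Int.fract_sub_div_le_one_div hT hk) 1)
    (Nat.cast_nonneg H)

theorem sum_cInvLevel_le_cImax {ι : Type*} [Fintype ι] (T H : ι → ℕ) (τ : ι → ℝ) (t : ℝ) :
    ∑ i, cInvLevel (T i) (H i) (τ i) t ≤ cImax T H τ := by
  refine le_ciSup (f := fun s => ∑ i, cInvLevel (T i) (H i) (τ i) s) ⟨∑ i, (H i : ℝ), ?_⟩ t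
  rintro _ ⟨s, rfl⟩
  exact sum_le_sum fun i _ => cInvLevel_le _ _ _ _

theorem sum_mul_one_sub_one_div_le_cImax {ι : Type*} [Fintype ι] {T : ι → ℕ}
    (hT : ∀ i, 0 < T i) (hcop : Pairwise (Nat.Coprime on T)) (H : ι → ℕ) (τ : ι → ℝ) :
    ∑ i, (H i : ℝ) * (1 - 1 / T i) ≤ cImax T H τ := by
  obtain ⟨k, hk⟩ := Int.exists_forall_dvd_sub_of_pairwise_coprime hcop fun i => ⌈τ i⌉
  calc ∑ i, (H i : ℝ) * (1 - 1 / T i)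
      ≤ ∑ i, cInvLevel (T i) (H i) (τ i) k :=
        sum_le_sum fun i _ => mul_one_sub_one_div_le_cInvLevel (hT i) (H i) (hk i)
    _ ≤ cImax T H τ := sum_cInvLevel_le_cImax T H τ k

theorem stmt19_general {n : ℕ} (hn : 0 < n) (T H : Fin n → ℕ) (hT : ∀ i, 0 < T i)
    (hcop : ∀ i j, i ≠ j → Nat.Coprime (T i) (T j)) :
    (∀ τ : Fin n → ℝ,
      (1 - 1 / ((Finset.univ.inf'
          (Finset.univ_nonempty_iff.mpr (Fin.pos_iff_nonempty.mp hn)) T : ℕ) : ℝ))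
        * ∑ i, (H i : ℝ) ≤ cImax T H τ) ∧
    (1 - 1 / ((Finset.univ.inf'
        (Finset.univ_nonempty_iff.mpr (Fin.pos_iff_nonempty.mp hn)) T : ℕ) : ℝ))
      * ∑ i, (H i : ℝ) ≤ OPTcont T H := by
  set Tmin := univ.inf' (univ_nonempty_iff.mpr (Fin.pos_iff_nonempty.mp hn)) T
  have hTmin_le : ∀ i, Tmin ≤ T i := fun i => inf'_le T (mem_univ i)
  have hTmin_pos : 0 < Tmin := (lt_inf'_iff _).mpr fun i _ => hT i
  have bound : ∀ τ : Fin n → ℝ, (1 - 1 / (Tmin : ℝ)) * ∑ i, (H i : ℝ) ≤ cImax T H τ := by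
    intro τ
    calc (1 - 1 / (Tmin : ℝ)) * ∑ i, (H i : ℝ)
        = ∑ i, (H i : ℝ) * (1 - 1 / Tmin) := by rw [mul_comm, sum_mul]
      _ ≤ ∑ i, (H i : ℝ) * (1 - 1 / T i) := by
        refine sum_le_sum fun i _ => mul_le_mul_of_nonneg_left ?_ (Nat.cast_nonneg _)
        exact sub_le_sub_left (one_div_le_one_div_of_le (Nat.cast_pos.mpr hTmin_pos)
          (Nat.cast_le.mpr (hTmin_le i))) 1
      _ ≤ cImax T H τ := sum_mul_one_sub_one_div_le_cImax hT (fun i j => hcop i j) H τ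
  exact ⟨bound, le_ciInf bound⟩

/-- For a continuous instance with pairwise coprime time intervals, every real shift
vector has peak inventory level at least `(1 − 1/T_min)·H_Σ`; in particular
`OPT^cont ≥ (1 − 1/T_min)·H_Σ`. -/
theorem stmt19 {n : ℕ} (hn : 0 < n) (T H : Fin n → ℕ) (hT : ∀ i, 0 < T i)
    (hH : ∀ i, 0 < H i)
    (hcop : ∀ i j, i ≠ j → Nat.Coprime (T i) (T j)) :
    (∀ τ : Fin n → ℝ,
      (1 - 1 / ((Finset.univ.inf'
          (Finset.univ_nonempty_iff.mpr (Fin.pos_iff_nonempty.mp hn)) T : ℕ) : ℝ))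
        * ∑ i, (H i : ℝ) ≤ cImax T H τ) ∧
    (1 - 1 / ((Finset.univ.inf'
        (Finset.univ_nonempty_iff.mpr (Fin.pos_iff_nonempty.mp hn)) T : ℕ) : ℝ))
      * ∑ i, (H i : ℝ) ≤ OPTcont T H :=
  stmt19_general hn T H hT hcop
end
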